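/- (Generalized upper bound for higher moments) Let A be the set of prime numbers, N ∈ ℕ, and k ≥ 1 an integer. Then E[τ_N^k] ≤ Σ_{p prime, p ≥ N} (p − N)^k · (5/6)^{π(N, p−1)}, where the sum runs over all prime numbers p ≥ N. -/

import Mathlib

open MeasureTheory ProbabilityTheory
open scoped ENNReal NNReal

noncomputable section

/-- The cumulative sum `S_t^(s) = s + X_1 + ... + X_t`, where the die faces are
`ω 0 + 1, ω 1 + 1, ...` (each in `{1,...,6}`). -/
def partialSum (s : ℕ) (ω : ℕ → Fin 6) (t : ℕ) : ℕ :=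
  s + ∑ j ∈ Finset.range t, ((ω j : ℕ) + 1)

/-- The hitting time `τ_s = inf {t : S_t^(s) ∈ A}`, with value `⊤` if the sum never hits `A`. -/
def hitTime (A : Set ℕ) (s : ℕ) (ω : ℕ → Fin 6) : ℕ∞ :=
  sInf {t : ℕ∞ | ∃ n : ℕ, t = (n : ℕ∞) ∧ partialSum s ω n ∈ A}

/-- The expectation `E[τ_s]`, as a Lebesgue integral with values in `[0,∞]`. -/
def hitExp (P : Measure (ℕ → Fin 6)) (A : Set ℕ) (s : ℕ) : ℝ≥0∞ :=
  ∫⁻ ω, (hitTime A s ω : ℝ≥0∞) ∂P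

/-- `π(s,n)`: the number of primes `p` with `s < p ≤ n` (for natural numbers `s`, `n`). -/
def primesBetween (s n : ℕ) : ℕ :=
  ((Finset.Icc (s + 1) n).filter Nat.Prime).card

/-!
Let `a n` be the probability that the walk avoids `B` at every level below `n`. Decompose
according to the step that crosses level `n`: whatever the past, the next roll lands exactly
on `n` with probability `1/6`, while it crosses `n` with probability at most `1`. Hence the walk
visits `n` with probability at least `a n / 6`, and for `n ∈ B` this gives
`a (n + 1) ≤ 5/6 · a n`. So the first prime hit is `p` with probability at most
`(5/6)^π(N, p-1)`, and then `τ_N ≤ p - N`; as there are infinitely many primes, `a n → 0` and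
the walk hits a prime almost surely.
-/
open Finset Function

structure IsFairDice (P : Measure (ℕ → Fin 6)) : Prop where
  indep : iIndepFun (fun n (ω : ℕ → Fin 6) => ω n) P
  uniform : ∀ (n : ℕ) (i : Fin 6), P {ω | ω n = i} = 1 / 6

section FairDice

variable {P : Measure (ℕ → Fin 6)}

section PartialSum

variable (s : ℕ) (ω : ℕ → Fin 6)

@[simp]
lemma partialSum_zero : partialSum s ω 0 = s := by
  simp [partialSum]

lemma partialSum_succ (t : ℕ) : partialSum s ω (t + 1) = partialSum s ω t + ω t + 1 := by
  simp [partialSum, sum_range_succ, add_assoc]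

lemma partialSum_strictMono : StrictMono (partialSum s ω) :=
  strictMono_nat_of_lt_succ fun t => by rw [partialSum_succ]; omega

lemma add_le_partialSum (t : ℕ) : s + t ≤ partialSum s ω t := by
  induction t with
  | zero => simp
  | succ t ih => rw [partialSum_succ]; omega

lemma partialSum_succ_le (t : ℕ) : partialSum s ω (t + 1) ≤ partialSum s ω t + 6 := by
  rw [partialSum_succ]; have := (ω t).isLt; omega

lemma exists_partialSum_lt_le_succ {n : ℕ} (hn : s < n) :
    ∃ t, partialSum s ω t < n ∧ n ≤ partialSum s ω (t + 1) := by
  by_contra! h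
  have hlt : ∀ t, partialSum s ω t < n := fun t => by
    induction t with
    | zero => simpa using hn
    | succ t ih => exact h t ih
  have := add_le_partialSum s ω n
  have := hlt n
  omega

lemma dependsOn_partialSum (t : ℕ) :
    DependsOn (fun ω => partialSum s ω t) (range t : Set ℕ) := fun x y hxy => by
  simp only [partialSum]
  exact congrArg (s + ·) (sum_congr rfl fun j hj => by rw [hxy j (mem_coe.2 hj)])

lemma measurable_partialSum (t : ℕ) : Measurable (fun ω => partialSum s ω t) := by
  simp only [partialSum]
  fun_prop

end PartialSum

lemma IsFairDice.six_mul_measure_inter_eq (hP : IsFairDice P) {t : ℕ}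
    {W : Set (ℕ → Fin 6)} (hW : DependsOn (· ∈ W) (range t : Set ℕ)) (i : Fin 6) :
    6 * P (W ∩ {ω | ω t = i}) = P W := by
  set past : (ℕ → Fin 6) → (range t → Fin 6) := fun ω j => ω j
  have hindep : IndepFun past (fun ω => ω t) P :=
    (hP.indep.indepFun_finset (range t) {t} (disjoint_singleton_right.2 notMem_range_self)
      measurable_pi_apply).comp measurable_id
      (measurable_pi_apply (⟨t, mem_singleton_self t⟩ : ({t} : Finset ℕ)))
  have hW' : W = past ⁻¹' (past '' W) := by
    refine (Set.subset_preimage_image _ _).antisymm ?_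
    rintro ω ⟨ω', hω', hpast⟩
    have := hW fun j hj => congrFun hpast ⟨j, mem_coe.1 hj⟩
    simp_all
  have hprod : P (W ∩ {ω | ω t = i}) = P W * (1 / 6) := by
    rw [← hP.uniform t i, hW']
    exact hindep.measure_inter_preimage_eq_mul _ {i} (Set.toFinite _).measurableSet
      (measurableSet_singleton i)
  rw [hprod, mul_comm, mul_assoc, one_div, ENNReal.inv_mul_cancel (by norm_num) (by norm_num),
    mul_one]

def avoidsBelow (B : Set ℕ) (s n : ℕ) : Set (ℕ → Fin 6) :=
  {ω | ∀ t, partialSum s ω t < n → partialSum s ω t ∉ B}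

def visits (s n : ℕ) : Set (ℕ → Fin 6) :=
  {ω | ∃ t, partialSum s ω t = n}

lemma measurableSet_avoidsBelow (B : Set ℕ) (s n : ℕ) : MeasurableSet (avoidsBelow B s n) := by
  simp only [avoidsBelow, Set.ofPred_forall]
  exact .iInter fun t => measurable_partialSum s t (.of_discrete (s := {m | m < n → m ∉ B}))

lemma measurableSet_visits (s n : ℕ) : MeasurableSet (visits s n) := by
  simp only [visits, Set.ofPred_exists]
  exact .iUnion fun t => measurable_partialSum s t (.of_discrete (s := {n}))

def landsNext (B : Set ℕ) (s n t : ℕ) (i : Fin 6) : Set (ℕ → Fin 6) :=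
  {ω | partialSum s ω t + i + 1 = n ∧ ∀ u ≤ t, partialSum s ω u ∉ B}

section Crossing

variable (B : Set ℕ) (s n : ℕ)

lemma dependsOn_landsNext (t : ℕ) (i : Fin 6) :
    DependsOn (· ∈ landsNext B s n t i) (range t : Set ℕ) := fun x y hxy => by
  have h : ∀ u ≤ t, partialSum s x u = partialSum s y u := fun u hu =>
    (dependsOn_partialSum s u).mono (by simpa using hu) hxy
  simp only [landsNext, Set.mem_ofPred_eq, h t le_rfl]
  exact propext (and_congr_right' (forall₂_congr fun u hu => by rw [h u hu]))

lemma avoidsBelow_subset_iUnion_landsNext (hn : s < n) :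
    avoidsBelow B s n ⊆ ⋃ ti : ℕ × Fin 6, landsNext B s n ti.1 ti.2 := by
  intro ω hω
  obtain ⟨t, hlt, hle⟩ := exists_partialSum_lt_le_succ s ω hn
  have hstep := partialSum_succ_le s ω t
  refine Set.mem_iUnion.2 ⟨(t, ⟨n - partialSum s ω t - 1, by omega⟩), ?_, fun u hu => ?_⟩
  · simp only; omega
  · exact hω u (((partialSum_strictMono s ω).monotone hu).trans_lt hlt)

lemma landsNext_inter_subset (t : ℕ) (i : Fin 6) :
    landsNext B s n t i ∩ {ω | ω t = i} ⊆ avoidsBelow B s n ∩ visits s n := by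
  rintro ω ⟨⟨hland, hpast⟩, rfl⟩
  have hsucc : partialSum s ω (t + 1) = n := by rw [partialSum_succ]; omega
  refine ⟨fun u hu => hpast u ?_, t + 1, hsucc⟩
  rw [← hsucc, (partialSum_strictMono s ω).lt_iff_lt] at hu
  omega

lemma pairwise_disjoint_landsNext_inter :
    Pairwise (Disjoint on fun ti : ℕ × Fin 6 =>
      landsNext B s n ti.1 ti.2 ∩ {ω | ω ti.1 = ti.2}) := by
  rintro ⟨t, i⟩ ⟨t', i'⟩ hne
  refine Set.disjoint_left.2 fun ω ⟨⟨h, _⟩, hi⟩ ⟨⟨h', _⟩, hi'⟩ => hne ?_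
  simp only [Set.mem_ofPred_eq] at h h' hi hi'
  have hsucc : partialSum s ω (t + 1) = partialSum s ω (t' + 1) := by
    rw [partialSum_succ, partialSum_succ, hi, hi']
    omega
  obtain rfl : t = t' := by simpa using (partialSum_strictMono s ω).injective hsucc
  rw [← hi, ← hi']

lemma measurableSet_landsNext_inter (t : ℕ) (i : Fin 6) :
    MeasurableSet (landsNext B s n t i ∩ {ω | ω t = i}) := by
  simp only [landsNext, Set.ofPred_and, Set.ofPred_forall]
  refine .inter (.inter ?_ (.iInter fun u => .iInter fun _ => ?_))
    (measurableSet_eq_fun (measurable_pi_apply t) measurable_const)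
  · exact measurable_partialSum s t (.of_discrete (s := {m | m + i + 1 = n}))
  · exact measurable_partialSum s u (.of_discrete (s := Bᶜ))

lemma IsFairDice.measure_avoidsBelow_le_six_mul (hP : IsFairDice P)
    (hsn : s ≤ n) : P (avoidsBelow B s n) ≤ 6 * P (avoidsBelow B s n ∩ visits s n) := by
  rcases hsn.eq_or_lt with rfl | hsn
  · have hvisit : avoidsBelow B s s ∩ visits s s = avoidsBelow B s s :=
      Set.inter_eq_left.2 fun ω _ => ⟨0, partialSum_zero s ω⟩
    rw [hvisit]
    exact le_mul_of_one_le_left' (by norm_num)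
  -- split according to the crossing step: its time `t` and the gap `n - S_t = i + 1`
  calc P (avoidsBelow B s n)
      ≤ ∑' ti : ℕ × Fin 6, P (landsNext B s n ti.1 ti.2) :=
        (measure_mono (avoidsBelow_subset_iUnion_landsNext B s n hsn)).trans (measure_iUnion_le _)
    _ = 6 * ∑' ti : ℕ × Fin 6, P (landsNext B s n ti.1 ti.2 ∩ {ω | ω ti.1 = ti.2}) := by
        rw [← ENNReal.tsum_mul_left]
        exact tsum_congr fun ti =>
          (hP.six_mul_measure_inter_eq (dependsOn_landsNext B s n ti.1 ti.2) ti.2).symm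
    _ = 6 * P (⋃ ti : ℕ × Fin 6, landsNext B s n ti.1 ti.2 ∩ {ω | ω ti.1 = ti.2}) := by
        rw [measure_iUnion (pairwise_disjoint_landsNext_inter B s n)
          fun ti => measurableSet_landsNext_inter B s n ti.1 ti.2]
    _ ≤ 6 * P (avoidsBelow B s n ∩ visits s n) := by
        gcongr
        exact Set.iUnion_subset fun ti => landsNext_inter_subset B s n ti.1 ti.2

end Crossing

lemma avoidsBelow_succ_subset (B : Set ℕ) (s n : ℕ) :
    avoidsBelow B s (n + 1) ⊆ avoidsBelow B s n :=
  fun _ hω t ht => hω t (ht.trans n.lt_succ_self)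

lemma avoidsBelow_succ_subset_diff {B : Set ℕ} {s n : ℕ} (hn : n ∈ B) :
    avoidsBelow B s (n + 1) ⊆ avoidsBelow B s n \ (avoidsBelow B s n ∩ visits s n) :=
  fun ω hω =>
    ⟨avoidsBelow_succ_subset B s n hω, fun ⟨_, t, ht⟩ => hω t (by omega) (ht ▸ hn)⟩

lemma IsFairDice.measureReal_avoidsBelow_succ_le (hP : IsFairDice P)
    {B : Set ℕ} {s n : ℕ} (hsn : s ≤ n) (hn : n ∈ B) :
    P.real (avoidsBelow B s (n + 1)) ≤ 5 / 6 * P.real (avoidsBelow B s n) := by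
  have := hP.indep.isProbabilityMeasure
  have hcross : P.real (avoidsBelow B s n) ≤ 6 * P.real (avoidsBelow B s n ∩ visits s n) := by
    simpa [measureReal_def, ENNReal.toReal_mul] using
      ENNReal.toReal_mono (by finiteness) (hP.measure_avoidsBelow_le_six_mul B s n hsn)
  have hdiff := measureReal_sdiff (μ := P) Set.inter_subset_left
    ((measurableSet_avoidsBelow B s n).inter (measurableSet_visits s n))
  have hsub := measureReal_mono (μ := P) (avoidsBelow_succ_subset_diff (s := s) hn)
  linarith

lemma IsFairDice.measureReal_avoidsBelow_le (hP : IsFairDice P)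
    (B : Set ℕ) [DecidablePred (· ∈ B)] (s n : ℕ) :
    P.real (avoidsBelow B s n) ≤ (5 / 6 : ℝ) ^ #{m ∈ Ico s n | m ∈ B} := by
  have := hP.indep.isProbabilityMeasure
  induction n with
  | zero => simp [measureReal_le_one]
  | succ n ih =>
    by_cases hstep : s ≤ n ∧ n ∈ B
    · have hcard : #{m ∈ Ico s (n + 1) | m ∈ B} = #{m ∈ Ico s n | m ∈ B} + 1 := by
        rw [Nat.Ico_succ_right_eq_insert_Ico hstep.1, filter_insert, if_pos hstep.2,
          card_insert_of_notMem (by simp)]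
      rw [hcard, pow_succ']
      exact (hP.measureReal_avoidsBelow_succ_le hstep.1 hstep.2).trans (by gcongr)
    · have hcard : #{m ∈ Ico s (n + 1) | m ∈ B} = #{m ∈ Ico s n | m ∈ B} := by
        congr 1
        ext m
        simp only [mem_filter, mem_Ico]
        grind
      rw [hcard]
      exact (measureReal_mono (avoidsBelow_succ_subset B s n)).trans ih

lemma exists_le_card_filter_Ico {B : Set ℕ} [DecidablePred (· ∈ B)] (hB : B.Infinite)
    (s r : ℕ) : ∃ n, r ≤ #{m ∈ Ico s n | m ∈ B} := by
  obtain ⟨T, hTB, rfl⟩ := (hB.sdiff (Set.finite_Iio s)).exists_subset_card_eq r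
  refine ⟨T.sup id + 1, card_le_card fun m hm => ?_⟩
  obtain ⟨hmB, hms⟩ := hTB hm
  simp only [mem_filter, mem_Ico]
  exact ⟨⟨not_lt.1 hms, Nat.lt_succ_of_le (le_sup (f := id) hm)⟩, hmB⟩

lemma IsFairDice.ae_exists_partialSum_mem (hP : IsFairDice P)
    {B : Set ℕ} (hB : B.Infinite) (s : ℕ) : ∀ᵐ ω ∂P, ∃ t, partialSum s ω t ∈ B := by
  classical
  have := hP.indep.isProbabilityMeasure
  have hle (r : ℕ) : P.real {ω | ¬∃ t, partialSum s ω t ∈ B} ≤ (5 / 6 : ℝ) ^ r := by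
    obtain ⟨n, hn⟩ := exists_le_card_filter_Ico hB s r
    calc P.real {ω | ¬∃ t, partialSum s ω t ∈ B}
        ≤ P.real (avoidsBelow B s n) := measureReal_mono fun ω hω t _ ht => hω ⟨t, ht⟩
      _ ≤ (5 / 6 : ℝ) ^ #{m ∈ Ico s n | m ∈ B} := hP.measureReal_avoidsBelow_le B s n
      _ ≤ (5 / 6 : ℝ) ^ r := pow_le_pow_of_le_one (by norm_num) (by norm_num) hn
  have hzero : P.real {ω | ¬∃ t, partialSum s ω t ∈ B} = 0 :=
    le_antisymm (ge_of_tendsto' (tendsto_pow_atTop_nhds_zero_of_lt_one (by norm_num)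
      (by norm_num)) hle) measureReal_nonneg
  exact ae_iff.2 ((measureReal_eq_zero_iff (measure_ne_top P _)).1 hzero)

lemma exists_mem_avoidsBelow_inter_visits {B : Set ℕ} {s : ℕ} {ω : ℕ → Fin 6}
    (h : ∃ t, partialSum s ω t ∈ B) :
    ∃ p ∈ B, ω ∈ avoidsBelow B s p ∩ visits s p := by
  classical
  refine ⟨_, Nat.find_spec h, fun u hu => Nat.find_min h ?_, _, rfl⟩
  rwa [(partialSum_strictMono s ω).lt_iff_lt] at hu

lemma hitTime_le_of_mem_visits {B : Set ℕ} {s p : ℕ} {ω : ℕ → Fin 6} (hp : p ∈ B)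
    (hω : ω ∈ visits s p) : hitTime B s ω ≤ (p - s : ℕ) := by
  obtain ⟨t, ht⟩ := hω
  have hmem : (t : ℕ∞) ∈ {x : ℕ∞ | ∃ n : ℕ, x = n ∧ partialSum s ω n ∈ B} :=
    ⟨t, rfl, ht ▸ hp⟩
  have := add_le_partialSum s ω t
  exact (sInf_le hmem).trans (by exact_mod_cast (show t ≤ p - s by omega))

lemma IsFairDice.measure_avoidsBelow_primes_le (hP : IsFairDice P) (N p : ℕ) :
    P (avoidsBelow {n | n.Prime} N p) ≤ (5 / 6 : ℝ≥0∞) ^ primesBetween N (p - 1) := by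
  have := hP.indep.isProbabilityMeasure
  have hcard : primesBetween N (p - 1) ≤ #{m ∈ Ico N p | m ∈ {n | n.Prime}} :=
    card_le_card fun m => by
      simp only [mem_filter, mem_Icc, mem_Ico, Set.mem_ofPred_eq]
      exact fun h => ⟨⟨by omega, by omega⟩, h.2⟩
  rw [← ofReal_measureReal]
  calc ENNReal.ofReal (P.real (avoidsBelow {n | n.Prime} N p))
      ≤ ENNReal.ofReal ((5 / 6 : ℝ) ^ primesBetween N (p - 1)) :=
        ENNReal.ofReal_le_ofReal ((hP.measureReal_avoidsBelow_le _ N p).trans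
          (pow_le_pow_of_le_one (by norm_num) (by norm_num) hcard))
    _ = (5 / 6 : ℝ≥0∞) ^ primesBetween N (p - 1) := by
        rw [ENNReal.ofReal_pow (by norm_num), ENNReal.ofReal_div_of_pos (by norm_num)]
        norm_num

lemma IsFairDice.lintegral_hitTime_pow_le (hP : IsFairDice P)
    {B : Set ℕ} [DecidablePred (· ∈ B)] (hB : B.Infinite) (s k : ℕ) :
    ∫⁻ ω, (hitTime B s ω : ℝ≥0∞) ^ k ∂P ≤ ∑' p : ℕ, if p ∈ B ∧ s ≤ p then
      ((p - s : ℕ) : ℝ≥0∞) ^ k * P (avoidsBelow B s p ∩ visits s p) else 0 := by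
  set E : ℕ → Set (ℕ → Fin 6) := fun p => avoidsBelow B s p ∩ visits s p
  have hE (p : ℕ) : MeasurableSet (E p) :=
    (measurableSet_avoidsBelow B s p).inter (measurableSet_visits s p)
  set f : ℕ → (ℕ → Fin 6) → ℝ≥0∞ := fun p =>
    if p ∈ B ∧ s ≤ p then (E p).indicator fun _ => ((p - s : ℕ) : ℝ≥0∞) ^ k else 0
  have hbound : ∀ᵐ ω ∂P, (hitTime B s ω : ℝ≥0∞) ^ k ≤ ∑' p, f p ω := by
    filter_upwards [hP.ae_exists_partialSum_mem hB s] with ω hω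
    obtain ⟨p, hp, hωp⟩ := exists_mem_avoidsBelow_inter_visits hω
    obtain ⟨t, ht⟩ := hωp.2
    have hsp : s ≤ p := ht ▸ (Nat.le_add_right s t).trans (add_le_partialSum s ω t)
    calc (hitTime B s ω : ℝ≥0∞) ^ k ≤ ((p - s : ℕ) : ℝ≥0∞) ^ k := by
          gcongr
          exact_mod_cast ENat.toENNReal_le.2 (hitTime_le_of_mem_visits hp hωp.2)
      _ = f p ω := by simp [f, E, hp, hsp, hωp]
      _ ≤ ∑' p, f p ω := ENNReal.le_tsum p
  calc ∫⁻ ω, (hitTime B s ω : ℝ≥0∞) ^ k ∂P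
      ≤ ∫⁻ ω, ∑' p, f p ω ∂P := lintegral_mono_ae hbound
    _ = ∑' p, ∫⁻ ω, f p ω ∂P := lintegral_tsum fun p => by
        by_cases hp : p ∈ B ∧ s ≤ p
        · simp only [f, if_pos hp]
          exact (measurable_const.indicator (hE p)).aemeasurable
        · simp only [f, if_neg hp]
          exact aemeasurable_const
    _ = _ := tsum_congr fun p => by
        by_cases hp : p ∈ B ∧ s ≤ p
        · simp only [f, if_pos hp, lintegral_indicator_const (hE p), E]
        · simp [f, hp]

end FairDice

theorem raw_moment_upper_bound_general
    (P : Measure (ℕ → Fin 6))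
    (hIndep : iIndepFun (fun n (ω : ℕ → Fin 6) => ω n) P)
    (hUnif : ∀ (n : ℕ) (i : Fin 6), P {ω | ω n = i} = 1 / 6) (N : ℕ) (k : ℕ) :
    (∫⁻ ω, ((hitTime {n | n.Prime} N ω : ℝ≥0∞)) ^ k ∂P)
      ≤ ∑' p : ℕ, if p.Prime ∧ N ≤ p then
          ((p - N : ℕ) : ℝ≥0∞) ^ k * (5 / 6 : ℝ≥0∞) ^ primesBetween N (p - 1)
        else 0 := by
  have hP : IsFairDice P := ⟨hIndep, hUnif⟩
  refine (hP.lintegral_hitTime_pow_le Nat.infinite_setOfPred_prime N k).trans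
    (ENNReal.tsum_le_tsum fun p => ?_)
  by_cases hp : p.Prime ∧ N ≤ p
  · rw [if_pos (show p ∈ {n | n.Prime} ∧ N ≤ p from hp), if_pos hp]
    gcongr
    exact (measure_mono Set.inter_subset_left).trans (hP.measure_avoidsBelow_primes_le N p)
  · rw [if_neg (show ¬(p ∈ {n | n.Prime} ∧ N ≤ p) from hp), if_neg hp]

/-- Generalized upper bound for higher moments: for `A` the set of primes and `k ≥ 1`,
`E[τ_N^k] ≤ Σ_{p prime, p ≥ N} (p − N)^k · (5/6)^{π(N, p−1)}`. -/
theorem raw_moment_upper_bound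
    (P : Measure (ℕ → Fin 6)) [IsProbabilityMeasure P]
    (hIndep : iIndepFun (fun n (ω : ℕ → Fin 6) => ω n) P)
    (hUnif : ∀ (n : ℕ) (i : Fin 6), P {ω | ω n = i} = 1 / 6) (N : ℕ) (k : ℕ) (hk : 1 ≤ k) :
    (∫⁻ ω, ((hitTime {n | n.Prime} N ω : ℝ≥0∞)) ^ k ∂P)
      ≤ ∑' p : ℕ, if p.Prime ∧ N ≤ p then
          ((p - N : ℕ) : ℝ≥0∞) ^ k * (5 / 6 : ℝ≥0∞) ^ primesBetween N (p - 1)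
        else 0 :=
  raw_moment_upper_bound_general P hIndep hUnif N k
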